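/- Let U : (0,∞) → ℝ be C¹ with U′(r) > 0 for all r > 0, lim_{r→0⁺} U(r) = U₀ ∈ ℝ, lim_{r→∞} U(r) = U_∞ ∈ (U₀, +∞], and suppose r ↦ r³U′(r) is strictly increasing with lim_{r→0⁺} r³U′(r) = 0 and lim_{r→∞} r³U′(r) = ∞. Fix E with U₀ < E < U_∞ and suppose r* > 0 is the unique solution of E − U(r) − (r/2)U′(r) = 0; set L_max = √(r*³ U′(r*)). Then: (i) for every L with 0 < L < L_max, the equation E − U(r) − L²/(2r²) = 0 has exactly two roots 0 < r₁(E,L) < r₂(E,L) < ∞; (ii) for L = L_max it has exactly one root, namely r = r*; (iii) for L > L_max it has no root. -/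

import Mathlib

open Real Set Filter
open scoped Topology

noncomputable section

/-! The radial kinetic energy `K_L(r) = E − U(r) − L²/(2r²)` has derivative
`(L² − r³U′(r)) / r³`. As `r³U′(r)` increases strictly from `0`, for `0 < L ≤ L_max` there is a
`c ≤ r*` with `c³U′(c) = L²`, and `K_L` increases strictly on `(0, c]` and decreases strictly on
`[c, ∞)`. For `L = L_max` we have `c = r*`, so `K_{L_max}(r*) = 0` is a strict maximum.
`K_L` decreases strictly in `L²`: for `L > L_max` it is therefore negative, and for `L < L_max`
it is positive at `r*`, while it tends to `−∞` at `0⁺` and is negative wherever `U > E`, which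
gives exactly one zero on each side of its maximum. -/

section Unimodal

variable {α β : Type*} [LinearOrder α] [Preorder β] {g : α → β} {a c : α}

theorem StrictMonoOn.lt_of_strictAntiOn_Ici (hm : StrictMonoOn g (Ioc a c))
    (ha : StrictAntiOn g (Ici c)) (hac : a < c) {r : α} (hr : a < r) (hne : r ≠ c) :
    g r < g c := by
  rcases hne.lt_or_gt with h | h
  · exact hm ⟨hr, h.le⟩ (right_mem_Ioc.2 hac) h
  · exact ha self_mem_Ici h.le h

theorem StrictMonoOn.eq_or_eq_of_strictAntiOn_Ici (hm : StrictMonoOn g (Ioc a c))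
    (ha : StrictAntiOn g (Ici c)) {r₁ r₂ r : α} (h₁ : r₁ ∈ Ioc a c) (h₂ : c ≤ r₂) (hr : a < r)
    {y : β} (hgr : g r = y) (hg₁ : g r₁ = y) (hg₂ : g r₂ = y) : r = r₁ ∨ r = r₂ := by
  rcases le_or_gt r c with h | h
  · exact .inl (hm.injOn ⟨hr, h⟩ h₁ (hgr.trans hg₁.symm))
  · exact .inr (ha.injOn h.le h₂ (hgr.trans hg₂.symm))

end Unimodal

section IntermediateValue

variable {α δ : Type*} [ConditionallyCompleteLinearOrder α] [TopologicalSpace α] [OrderTopology α]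
  [DenselyOrdered α] [NoMaxOrder α] [LinearOrder δ] [TopologicalSpace δ] [OrderClosedTopology δ]
  {f : α → δ}

theorem exists_mem_Ioo_eq_of_eventually_lt_nhdsGT {a b : α} {y : δ} (hab : a < b)
    (hf : ContinuousOn f (Ioc a b)) (hlt : ∀ᶠ x in 𝓝[>] a, f x < y) (hy : y < f b) :
    ∃ c ∈ Ioo a b, f c = y := by
  obtain ⟨a', hfa', ha'⟩ := (hlt.and (Ioo_mem_nhdsGT hab)).exists
  obtain ⟨c, hc, hfc⟩ := intermediate_value_Ioo ha'.2.le
    (hf.mono fun x hx => ⟨ha'.1.trans_le hx.1, hx.2⟩) ⟨hfa', hy⟩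
  exact ⟨c, ⟨ha'.1.trans hc.1, hc.2⟩, hfc⟩

theorem exists_mem_Ioi_eq_of_eventually_lt_atTop {a : α} {y : δ}
    (hf : ContinuousOn f (Ici a)) (hlt : ∀ᶠ x in atTop, f x < y) (hy : y < f a) :
    ∃ c ∈ Ioi a, f c = y := by
  obtain ⟨b, hfb, hab⟩ := (hlt.and (eventually_gt_atTop a)).exists
  obtain ⟨c, hc, hfc⟩ := intermediate_value_Ioo' hab.le (hf.mono Icc_subset_Ici_self) ⟨hfb, hy⟩
  exact ⟨c, hc.1, hfc⟩

end IntermediateValue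

/-- `ṙ² / 2` for a unit mass with energy `E` and angular momentum `L` in the potential `U`. -/
def radialKineticEnergy (U : ℝ → ℝ) (E L r : ℝ) : ℝ :=
  E - U r - L ^ 2 / (2 * r ^ 2)

section RadialKineticEnergy

variable {U : ℝ → ℝ} {E L r : ℝ}

theorem radialKineticEnergy_le_sub : radialKineticEnergy U E L r ≤ E - U r :=
  sub_le_self _ (by positivity)

theorem radialKineticEnergy_lt_of_sq_lt {L' : ℝ} (hr : r ≠ 0) (hL : L ^ 2 < L' ^ 2) :
    radialKineticEnergy U E L' r < radialKineticEnergy U E L r :=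
  sub_lt_sub_left (div_lt_div_of_pos_right hL (by positivity)) _

theorem radialKineticEnergy_sqrt {u : ℝ} (hu : 0 ≤ r ^ 3 * u) :
    radialKineticEnergy U E √(r ^ 3 * u) r = E - U r - r / 2 * u := by
  rw [radialKineticEnergy, sq_sqrt hu]
  field_simp

theorem tendsto_radialKineticEnergy_nhdsGT_zero {U₀ : ℝ} (hU₀ : Tendsto U (𝓝[>] 0) (𝓝 U₀))
    (hL : L ≠ 0) : Tendsto (radialKineticEnergy U E L) (𝓝[>] 0) atBot := by
  have hcentrifugal : Tendsto (fun r : ℝ => L ^ 2 / 2 * r⁻¹ ^ 2) (𝓝[>] 0) atTop :=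
    ((tendsto_pow_atTop two_ne_zero).comp tendsto_inv_nhdsGT_zero).const_mul_atTop (by positivity)
  refine (((tendsto_const_nhds (x := E)).sub hU₀).add_atBot
    (tendsto_neg_atTop_atBot.comp hcentrifugal)).congr fun r => ?_
  simp only [radialKineticEnergy, Function.comp_apply]
  ring

theorem hasDerivAt_radialKineticEnergy (hU : DifferentiableAt ℝ U r) (hr : r ≠ 0) :
    HasDerivAt (radialKineticEnergy U E L) ((L ^ 2 - r ^ 3 * deriv U r) / r ^ 3) r := by
  have hsq : HasDerivAt (fun x : ℝ => 2 * x ^ 2) (2 * (2 * r)) r := by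
    simpa using (hasDerivAt_pow 2 r).const_mul (2 : ℝ)
  refine (((hasDerivAt_const r E).sub hU.hasDerivAt).sub
    ((hasDerivAt_const r (L ^ 2)).div hsq (by positivity))).congr_deriv ?_
  field_simp
  ring

theorem continuousOn_radialKineticEnergy (hU : DifferentiableOn ℝ U (Ioi 0)) {s : Set ℝ}
    (hs : s ⊆ Ioi 0) : ContinuousOn (radialKineticEnergy U E L) s := fun _ hx =>
  (hasDerivAt_radialKineticEnergy (hU.differentiableAt (Ioi_mem_nhds (hs hx)))
    (hs hx).ne').continuousAt.continuousWithinAt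

section Monotonicity

variable (hU : DifferentiableOn ℝ U (Ioi 0))
  (hF : StrictMonoOn (fun r => r ^ 3 * deriv U r) (Ioi 0)) {c : ℝ} (hc : 0 < c)
  (hcL : c ^ 3 * deriv U c = L ^ 2)
include hU hF hc hcL

theorem strictMonoOn_radialKineticEnergy :
    StrictMonoOn (radialKineticEnergy U E L) (Ioc 0 c) := by
  refine strictMonoOn_of_deriv_pos (convex_Ioc 0 c)
    (continuousOn_radialKineticEnergy hU fun _ hx => hx.1) fun x hx => ?_
  rw [interior_Ioc] at hx
  rw [(hasDerivAt_radialKineticEnergy (hU.differentiableAt (Ioi_mem_nhds hx.1)) hx.1.ne').deriv]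
  have hFx : x ^ 3 * deriv U x < L ^ 2 := hcL ▸ hF hx.1 hc hx.2
  exact div_pos (sub_pos.2 hFx) (pow_pos hx.1 3)

theorem strictAntiOn_radialKineticEnergy :
    StrictAntiOn (radialKineticEnergy U E L) (Ici c) := by
  refine strictAntiOn_of_deriv_neg (convex_Ici c)
    (continuousOn_radialKineticEnergy hU fun _ hx => hc.trans_le hx) fun x hx => ?_
  rw [interior_Ici] at hx
  have hx0 : 0 < x := hc.trans hx
  rw [(hasDerivAt_radialKineticEnergy (hU.differentiableAt (Ioi_mem_nhds hx0)) hx0.ne').deriv]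
  have hFx : L ^ 2 < x ^ 3 * deriv U x := hcL ▸ hF hc hx0 hx
  exact div_neg_of_neg_of_pos (sub_neg.2 hFx) (pow_pos hx0 3)

end Monotonicity

theorem exists_two_zeros_radialKineticEnergy (hU : ContDiffOn ℝ 1 U (Ioi 0)) {U₀ : ℝ}
    (hU₀ : Tendsto U (𝓝[>] 0) (𝓝 U₀)) (hUE : ∀ᶠ r in atTop, E < U r)
    (hF : StrictMonoOn (fun r => r ^ 3 * deriv U r) (Ioi 0))
    (hF₀ : Tendsto (fun r => r ^ 3 * deriv U r) (𝓝[>] 0) (𝓝 0)) (hL : 0 < L) {b : ℝ} (hb : 0 < b)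
    (hLb : L ^ 2 < b ^ 3 * deriv U b) (hKb : 0 < radialKineticEnergy U E L b) :
    ∃ r₁ r₂ : ℝ, 0 < r₁ ∧ r₁ < r₂ ∧
      radialKineticEnergy U E L r₁ = 0 ∧ radialKineticEnergy U E L r₂ = 0 ∧
      ∀ r : ℝ, 0 < r → radialKineticEnergy U E L r = 0 → r = r₁ ∨ r = r₂ := by
  have hUd := hU.differentiableOn one_ne_zero
  have hFc : ContinuousOn (fun r => r ^ 3 * deriv U r) (Ioc 0 b) :=
    ((continuous_pow 3).continuousOn.mul (hU.continuousOn_deriv_of_isOpen isOpen_Ioi le_rfl)).mono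
      fun _ hx => hx.1
  obtain ⟨c, ⟨hc, hcb⟩, hcL⟩ :=
    exists_mem_Ioo_eq_of_eventually_lt_nhdsGT hb hFc (hF₀.eventually_lt_const (pow_pos hL 2)) hLb
  have hmono := strictMonoOn_radialKineticEnergy (E := E) hUd hF hc hcL
  have hanti := strictAntiOn_radialKineticEnergy (E := E) hUd hF hc hcL
  have hKc : 0 < radialKineticEnergy U E L c := hKb.trans (hanti self_mem_Ici hcb.le hcb)
  obtain ⟨r₁, ⟨hr₁, hr₁c⟩, hK₁⟩ := exists_mem_Ioo_eq_of_eventually_lt_nhdsGT hc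
    (continuousOn_radialKineticEnergy hUd fun _ hx => hx.1)
    ((tendsto_radialKineticEnergy_nhdsGT_zero hU₀ hL.ne').eventually_lt_atBot 0) hKc
  obtain ⟨r₂, hr₂c, hK₂⟩ := exists_mem_Ioi_eq_of_eventually_lt_atTop
    (continuousOn_radialKineticEnergy hUd fun _ hx => hc.trans_le hx)
    (hUE.mono fun _ hr => radialKineticEnergy_le_sub.trans_lt (sub_neg.2 hr)) hKc
  exact ⟨r₁, r₂, hr₁, hr₁c.trans hr₂c, hK₁, hK₂, fun r hr hK =>
    hmono.eq_or_eq_of_strictAntiOn_Ici hanti ⟨hr₁, hr₁c.le⟩ hr₂c.le hr hK hK₁ hK₂⟩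

end RadialKineticEnergy

theorem turning_points_general
    (U : ℝ → ℝ) (hU : ContDiffOn ℝ 1 U (Ioi 0))
    (hU' : ∀ r : ℝ, 0 < r → 0 < deriv U r)
    (U₀ : ℝ) (hU₀ : Tendsto U (nhdsWithin 0 (Ioi 0)) (nhds U₀))
    (Uinf : EReal) (hUinf : Tendsto (fun r : ℝ => (U r : EReal)) atTop (nhds Uinf))
    (hmono : StrictMonoOn (fun r : ℝ => r ^ 3 * deriv U r) (Ioi 0))
    (hmono0 : Tendsto (fun r : ℝ => r ^ 3 * deriv U r) (nhdsWithin 0 (Ioi 0)) (nhds 0))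
    (E : ℝ) (hEinf : (E : EReal) < Uinf)
    (rs : ℝ) (hrs : 0 < rs)
    (hrsroot : E - U rs - rs / 2 * deriv U rs = 0)
    (Lmax : ℝ) (hLmax : Lmax = Real.sqrt (rs ^ 3 * deriv U rs)) :
    (∀ L : ℝ, 0 < L → L < Lmax →
      ∃ r₁ r₂ : ℝ, 0 < r₁ ∧ r₁ < r₂ ∧
        E - U r₁ - L ^ 2 / (2 * r₁ ^ 2) = 0 ∧ E - U r₂ - L ^ 2 / (2 * r₂ ^ 2) = 0 ∧
        ∀ r : ℝ, 0 < r → E - U r - L ^ 2 / (2 * r ^ 2) = 0 → r = r₁ ∨ r = r₂) ∧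
    (∀ r : ℝ, 0 < r → (E - U r - Lmax ^ 2 / (2 * r ^ 2) = 0 ↔ r = rs)) ∧
    (∀ L : ℝ, Lmax < L → ∀ r : ℝ, 0 < r → E - U r - L ^ 2 / (2 * r ^ 2) ≠ 0) := by
  have hUd := hU.differentiableOn one_ne_zero
  have hF_rs : 0 ≤ rs ^ 3 * deriv U rs := (mul_pos (pow_pos hrs 3) (hU' rs hrs)).le
  have hLmax_sq : Lmax ^ 2 = rs ^ 3 * deriv U rs := by rw [hLmax, sq_sqrt hF_rs]
  have hK_rs : radialKineticEnergy U E Lmax rs = 0 := by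
    rw [hLmax, radialKineticEnergy_sqrt hF_rs, hrsroot]
  have hK_lt : ∀ r, 0 < r → r ≠ rs → radialKineticEnergy U E Lmax r < 0 := fun r hr hne =>
    hK_rs ▸ (strictMonoOn_radialKineticEnergy hUd hmono hrs hLmax_sq.symm).lt_of_strictAntiOn_Ici
      (strictAntiOn_radialKineticEnergy hUd hmono hrs hLmax_sq.symm) hrs hr hne
  have hK_le : ∀ r, 0 < r → radialKineticEnergy U E Lmax r ≤ 0 := fun r hr => by
    rcases eq_or_ne r rs with rfl | hne
    exacts [hK_rs.le, (hK_lt r hr hne).le]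
  have hUE : ∀ᶠ r in atTop, E < U r :=
    (hUinf.eventually_const_lt hEinf).mono fun _ h => EReal.coe_lt_coe_iff.1 h
  refine ⟨fun L hL hLlt => ?_, fun r hr => ⟨fun h => ?_, fun h => h ▸ hK_rs⟩, fun L hLlt r hr => ?_⟩
  · have hL_sq : L ^ 2 < Lmax ^ 2 := pow_lt_pow_left₀ hLlt hL.le two_ne_zero
    exact exists_two_zeros_radialKineticEnergy hU hU₀ hUE hmono hmono0 hL hrs (hLmax_sq ▸ hL_sq)
      (hK_rs ▸ radialKineticEnergy_lt_of_sq_lt hrs.ne' hL_sq)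
  · by_contra hne
    exact (hK_lt r hr hne).ne h
  · have hL_sq : Lmax ^ 2 < L ^ 2 := pow_lt_pow_left₀ hLlt (hLmax ▸ sqrt_nonneg _) two_ne_zero
    exact ((radialKineticEnergy_lt_of_sq_lt hr.ne' hL_sq).trans_le (hK_le r hr)).ne

/-- **Turning points of the radial motion.**  Let `U` be a `C¹` increasing spherically
symmetric potential on `(0,∞)` with limits `U₀` at `0⁺` and `U_∞ ∈ (U₀, +∞]` at `∞`, such
that `r ↦ r³U′(r)` is strictly increasing from `0` to `∞`.  Fix `U₀ < E < U_∞` and let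
`r* > 0` be the unique solution of `E − U(r) − (r/2)U′(r) = 0`, and set
`L_max = √(r*³U′(r*))`.  Then for `0 < L < L_max` the equation `E − U(r) − L²/(2r²) = 0`
has exactly two roots `0 < r₁ < r₂ < ∞`; for `L = L_max` it has exactly one root, namely
`r = r*`; and for `L > L_max` it has no root. -/
theorem turning_points
    (U : ℝ → ℝ) (hU : ContDiffOn ℝ 1 U (Ioi 0))
    (hU' : ∀ r : ℝ, 0 < r → 0 < deriv U r)
    (U₀ : ℝ) (hU₀ : Tendsto U (nhdsWithin 0 (Ioi 0)) (nhds U₀))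
    (Uinf : EReal) (hUinf : Tendsto (fun r : ℝ => (U r : EReal)) atTop (nhds Uinf))
    (hU₀inf : (U₀ : EReal) < Uinf)
    (hmono : StrictMonoOn (fun r : ℝ => r ^ 3 * deriv U r) (Ioi 0))
    (hmono0 : Tendsto (fun r : ℝ => r ^ 3 * deriv U r) (nhdsWithin 0 (Ioi 0)) (nhds 0))
    (hmonoInf : Tendsto (fun r : ℝ => r ^ 3 * deriv U r) atTop atTop)
    (E : ℝ) (hE₀ : U₀ < E) (hEinf : (E : EReal) < Uinf)
    (rs : ℝ) (hrs : 0 < rs)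
    (hrsroot : E - U rs - rs / 2 * deriv U rs = 0)
    (hrsuniq : ∀ r : ℝ, 0 < r → E - U r - r / 2 * deriv U r = 0 → r = rs)
    (Lmax : ℝ) (hLmax : Lmax = Real.sqrt (rs ^ 3 * deriv U rs)) :
    (∀ L : ℝ, 0 < L → L < Lmax →
      ∃ r₁ r₂ : ℝ, 0 < r₁ ∧ r₁ < r₂ ∧
        E - U r₁ - L ^ 2 / (2 * r₁ ^ 2) = 0 ∧ E - U r₂ - L ^ 2 / (2 * r₂ ^ 2) = 0 ∧
        ∀ r : ℝ, 0 < r → E - U r - L ^ 2 / (2 * r ^ 2) = 0 → r = r₁ ∨ r = r₂) ∧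
    (∀ r : ℝ, 0 < r → (E - U r - Lmax ^ 2 / (2 * r ^ 2) = 0 ↔ r = rs)) ∧
    (∀ L : ℝ, Lmax < L → ∀ r : ℝ, 0 < r → E - U r - L ^ 2 / (2 * r ^ 2) ≠ 0) :=
  turning_points_general U hU hU' U₀ hU₀ Uinf hUinf hmono hmono0 E hEinf rs hrs hrsroot Lmax hLmax
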